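/- Let H be a simply connected combinatorial strata structure endowed with a datum (N, {P_J}) of nodal strata, and let B be a nodal separating block of N in H. Let i, j ∈ I be two distinct indices such that A_B(i) = A_B(j). Assume there exists a 2-path ω = (K_0, K_1, …, K_u) in H with support contained in B such that i ∈ K_0 and j ∈ K_u. Then there is a 1-path β in H joining {i} and {j} such that no entry of the subsupport Sub(β) belongs to N. In particular κ_B(β) = 0. -/

import Mathlib

/-!
Walk along `ω`. For consecutive strata `K, K'` of `ω` the union `T = K ∪ K'` is nodal, since
`K ∈ N*`, and `K'` meets both sides of the partition of `T`; so every point of `K` has a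
partner in `K'` on its own side, and such a pair is not nodal. This joins `{i}` to some `{w}`,
`w ∈ K_u`, avoiding `N`. If `w ≠ j`, then `K_u = {w, j} ∈ B`, and one more step reaches `{j}`
with `κ_B` odd. In a simply connected `H` the parity of `κ_B` depends only on the endpoints:
inside a 3-stratum `T` containing a pair of `B`, the pairs of `B` are exactly those crossing
the partition of `T`, so every triangle contains an even number of them. This contradicts
`{j} ∈ A_B(j) = A_B(i)`.
-/

/-- A combinatorial strata structure with minimal set of indices the (finite) type `I`:
an open subset of `𝒫(I)` (i.e. a family closed under taking subsets) containing all
singletons. -/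
def IsCSS {I : Type*} (H : Set (Finset I)) : Prop :=
  (∀ J ∈ H, ∀ J' : Finset I, J' ⊆ J → J' ∈ H) ∧ ∀ i : I, ({i} : Finset I) ∈ H

/-- `level H k` is `H(k)`, the set of strata of `H` with exactly `k` elements. -/
def level {I : Type*} (H : Set (Finset I)) (k : ℕ) : Set (Finset I) :=
  {J ∈ H | J.card = k}

/-- A `k`-path in `H`: a nonempty sequence of strata of `H(k)` such that the union of
any two consecutive entries lies in `H(k+1)`. -/
def IsKPath {I : Type*} [DecidableEq I] (H : Set (Finset I)) (k : ℕ)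
    (γ : List (Finset I)) : Prop :=
  γ ≠ [] ∧ (∀ J ∈ γ, J ∈ level H k) ∧
    γ.Chain' fun J J' => (J ∪ J') ∈ level H (k + 1)

/-- The path `γ` joins `J` and `J'`. -/
def Joins {I : Type*} (γ : List (Finset I)) (J J' : Finset I) : Prop :=
  γ.head? = some J ∧ γ.getLast? = some J'

/-- The subsupport of a path: the sequence of unions of consecutive entries. -/
def subSup {I : Type*} [DecidableEq I] (γ : List (Finset I)) : List (Finset I) :=
  List.zipWith (· ∪ ·) γ γ.tail

open Classical in
/-- `kappa B γ`: the number of entries of the subsupport of `γ` that belong to `B`. -/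
noncomputable def kappa {I : Type*} [DecidableEq I] (B : Set (Finset I))
    (γ : List (Finset I)) : ℕ :=
  (subSup γ).countP fun J => decide (J ∈ B)

/-- `A` is `k`-connected in `H`: any two elements of `A` are joined by a `k`-path in `H`
with support contained in `A`. -/
def KConnectedIn {I : Type*} [DecidableEq I] (H : Set (Finset I)) (k : ℕ)
    (A : Set (Finset I)) : Prop :=
  ∀ J ∈ A, ∀ J' ∈ A, ∃ γ : List (Finset I),
    IsKPath H k γ ∧ Joins γ J J' ∧ ∀ K ∈ γ, K ∈ A

/-- `C` is a `k`-connected component of `A` in `H`: a maximal nonempty `k`-connected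
subset of `A`. -/
def IsKComponent {I : Type*} [DecidableEq I] (H : Set (Finset I)) (k : ℕ)
    (A C : Set (Finset I)) : Prop :=
  C.Nonempty ∧ C ⊆ A ∧ KConnectedIn H k C ∧
    ∀ C' : Set (Finset I), C ⊆ C' → C' ⊆ A → KConnectedIn H k C' → C' = C

/-- `H` is 1-connected: `H(1)` is 1-connected in `H`. -/
def OneConnected {I : Type*} [DecidableEq I] (H : Set (Finset I)) : Prop :=
  KConnectedIn H 1 (level H 1)

/-- One-sided version of an elementary homotopic pair of 1-paths in `H`. -/
def ElemPairCore {I : Type*} [DecidableEq I] (H : Set (Finset I))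
    (ε ε' : List (Finset I)) : Prop :=
  ε = ε'
  ∨ (∃ i₁ i₂ : I, ε = [{i₁}, {i₂}, {i₁}] ∧ ε' = [{i₁}])
  ∨ (∃ i₁ i₂ i₃ : I, ε = [{i₁}, {i₂}] ∧ ε' = [{i₁}, {i₃}, {i₂}] ∧
      IsKPath H 2 [{i₁, i₃}, {i₃, i₂}])

/-- An elementary homotopic pair of 1-paths in `H` (up to swapping the two paths). -/
def ElemPair {I : Type*} [DecidableEq I] (H : Set (Finset I))
    (ε ε' : List (Finset I)) : Prop :=
  ElemPairCore H ε ε' ∨ ElemPairCore H ε' ε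

/-- `γ₂` is obtained from `γ₁` by an elementary homotopy. -/
def ElemHomotopy {I : Type*} [DecidableEq I] (H : Set (Finset I))
    (γ₁ γ₂ : List (Finset I)) : Prop :=
  ∃ δ ε₁ ε₂ ρ : List (Finset I),
    ElemPair H ε₁ ε₂ ∧ γ₁ = δ ++ ε₁ ++ ρ ∧ γ₂ = δ ++ ε₂ ++ ρ

/-- `γ` and `γ'` are homotopically equivalent in `H` with support in `A`: they are linked
by a finite chain of elementary homotopies in which every intermediate 1-path has
support in `A`. -/
def HomotopicIn {I : Type*} [DecidableEq I] (H A : Set (Finset I))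
    (γ γ' : List (Finset I)) : Prop :=
  (IsKPath H 1 γ ∧ ∀ J ∈ γ, J ∈ A) ∧
    Relation.ReflTransGen
      (fun g₁ g₂ => ElemHomotopy H g₁ g₂ ∧ IsKPath H 1 g₂ ∧ ∀ J ∈ g₂, J ∈ A) γ γ'

/-- A 1-connected subset `A ⊆ H(1)` is simply connected in `H`: any two 1-paths in `H`
with support in `A` joining the same strata are homotopically equivalent in `H` with
support in `A`. -/
def SimplyConnectedIn {I : Type*} [DecidableEq I] (H A : Set (Finset I)) : Prop :=
  KConnectedIn H 1 A ∧
    ∀ γ γ' : List (Finset I), IsKPath H 1 γ → IsKPath H 1 γ' →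
      (∀ J ∈ γ, J ∈ A) → (∀ J ∈ γ', J ∈ A) →
      γ.head? = γ'.head? → γ.getLast? = γ'.getLast? →
      HomotopicIn H A γ γ'

/-- `H` is simply connected: `H(1)` is simply connected in `H`. -/
def SimplyConnected {I : Type*} [DecidableEq I] (H : Set (Finset I)) : Prop :=
  SimplyConnectedIn H (level H 1)

/-- The closure of `A` in `H`: the strata of `H` containing some element of `A`. -/
def Cl {I : Type*} (H A : Set (Finset I)) : Set (Finset I) :=
  {J' ∈ H | ∃ J ∈ A, J ⊆ J'}

/-- A datum of nodal strata `(N, {P_J})` in `H`: a subset `N ⊆ H` together with, for each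
`J ∈ N`, a partition `P_J = {J₊, J₋}` of `J` into two nonempty parts, such that for every
`J ∈ N` and `J' ⊆ J` one has `J' ∈ N` iff `J' ∩ J₊ ≠ ∅ ≠ J' ∩ J₋`, and in that case
`P_{J'} = {J' ∩ J₊, J' ∩ J₋}`. -/
structure NodalDatum {I : Type*} [DecidableEq I] (H : Set (Finset I)) : Type _ where
  N : Set (Finset I)
  N_sub : N ⊆ H
  plus : Finset I → Finset I
  minus : Finset I → Finset I
  plus_nonempty : ∀ J ∈ N, (plus J).Nonempty
  minus_nonempty : ∀ J ∈ N, (minus J).Nonempty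
  union_eq : ∀ J ∈ N, plus J ∪ minus J = J
  disj : ∀ J ∈ N, Disjoint (plus J) (minus J)
  mem_iff : ∀ J ∈ N, ∀ J' : Finset I, J' ⊆ J →
    (J' ∈ N ↔ (J' ∩ plus J).Nonempty ∧ (J' ∩ minus J).Nonempty)
  part_eq : ∀ J ∈ N, ∀ J' : Finset I, J' ⊆ J → J' ∈ N →
    ({plus J', minus J'} : Set (Finset I)) = {J' ∩ plus J, J' ∩ minus J}

/-- `N*`: the set of uninterrupted nodal strata, i.e. `J ∈ N` with `Cl_H({J}) ⊆ N`. -/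
def Nstar {I : Type*} [DecidableEq I] {H : Set (Finset I)} (D : NodalDatum H) :
    Set (Finset I) :=
  {J ∈ D.N | ∀ J' ∈ H, J ⊆ J' → J' ∈ D.N}

/-- A nodal block of `N` in `H`: a 2-connected component of `N(2) = N ∩ H(2)` in `H`. -/
def IsNodalBlock {I : Type*} [DecidableEq I] {H : Set (Finset I)} (D : NodalDatum H)
    (B : Set (Finset I)) : Prop :=
  IsKComponent H 2 (D.N ∩ level H 2) B

/-- A nodal separating block: a nodal block contained in `N*`. -/
def IsSepBlock {I : Type*} [DecidableEq I] {H : Set (Finset I)} (D : NodalDatum H)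
    (B : Set (Finset I)) : Prop :=
  IsNodalBlock D B ∧ B ⊆ Nstar D

/-- The separator set: the union of all nodal separating blocks. -/
def SepSet {I : Type*} [DecidableEq I] {H : Set (Finset I)} (D : NodalDatum H) :
    Set (Finset I) :=
  ⋃₀ {B | IsSepBlock D B}

/-- `A_B(i)`: the set of `{j} ∈ H(1)` joined to `{i}` by a 1-path `γ` in `H` with
`κ_B(γ)` even. -/
def ABset {I : Type*} [DecidableEq I] (H B : Set (Finset I)) (i : I) : Set (Finset I) :=
  {J ∈ level H 1 | ∃ γ : List (Finset I),
    IsKPath H 1 γ ∧ Joins γ {i} J ∧ Even (kappa B γ)}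

/-- `B_B(i)`: the set of `{j} ∈ H(1)` joined to `{i}` by a 1-path `γ` in `H` with
`κ_B(γ)` odd. -/
def BBset {I : Type*} [DecidableEq I] (H B : Set (Finset I)) (i : I) : Set (Finset I) :=
  {J ∈ level H 1 | ∃ γ : List (Finset I),
    IsKPath H 1 γ ∧ Joins γ {i} J ∧ Odd (kappa B γ)}


section

variable {I : Type*}

lemma Joins.reverse {γ : List (Finset I)} {J J' : Finset I} (h : Joins γ J J') :
    Joins γ.reverse J' J :=
  ⟨by rw [List.head?_reverse]; exact h.2, by rw [List.getLast?_reverse]; exact h.1⟩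

lemma IsCSS.singleton_mem_level {H : Set (Finset I)} (hH : IsCSS H) (v : I) :
    {v} ∈ level H 1 :=
  ⟨hH.2 v, Finset.card_singleton v⟩

variable [DecidableEq I]

section Paths

variable {H : Set (Finset I)} {k : ℕ}

lemma subSup_cons_cons (a b : Finset I) (l : List (Finset I)) :
    subSup (a :: b :: l) = (a ∪ b) :: subSup (b :: l) := rfl

/-- The middle term is the union across the junction, absent if either list is empty. -/
lemma subSup_append (l₁ l₂ : List (Finset I)) :
    subSup (l₁ ++ l₂) = subSup l₁ ++ subSup (l₁.getLast?.toList ++ l₂.head?.toList) ++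
      subSup l₂ := by
  induction l₁ with
  | nil => cases l₂ <;> simp [subSup]
  | cons a l₁ ih =>
    cases l₁ with
    | nil => cases l₂ <;> simp [subSup]
    | cons b l₁ =>
      rw [List.cons_append, List.cons_append, subSup_cons_cons, ← List.cons_append, ih,
        subSup_cons_cons, List.getLast?_cons_cons]
      simp

lemma kappa_append (B : Set (Finset I)) (l₁ l₂ : List (Finset I)) :
    kappa B (l₁ ++ l₂) =
      kappa B l₁ + kappa B (l₁.getLast?.toList ++ l₂.head?.toList) + kappa B l₂ := by
  unfold kappa
  rw [subSup_append, List.countP_append, List.countP_append]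

lemma kappa_splice (B : Set (Finset I)) (δ ρ : List (Finset I)) {ε₁ ε₂ : List (Finset I)}
    (hhead : ε₁.head? = ε₂.head?) (hlast : ε₁.getLast? = ε₂.getLast?) :
    kappa B (δ ++ ε₁ ++ ρ) + kappa B ε₂ = kappa B (δ ++ ε₂ ++ ρ) + kappa B ε₁ := by
  simp only [List.append_assoc, kappa_append B δ, kappa_append B _ ρ, List.head?_append, hhead,
    hlast]
  omega

open Classical in
lemma kappa_pair (B : Set (Finset I)) (a b : Finset I) :
    kappa B [a, b] = if a ∪ b ∈ B then 1 else 0 := by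
  simp [kappa, subSup]

lemma kappa_eq_zero {B : Set (Finset I)} {γ : List (Finset I)}
    (h : ∀ J ∈ subSup γ, J ∉ B) : kappa B γ = 0 :=
  List.countP_eq_zero.mpr fun J hJ => by simpa using h J hJ

lemma IsKPath.singleton {J : Finset I} (hJ : J ∈ level H k) : IsKPath H k [J] :=
  ⟨List.cons_ne_nil _ _, by simpa using hJ, List.isChain_singleton _⟩

lemma IsKPath.cons {γ : List (Finset I)} {J J' : Finset I} (hγ : IsKPath H k γ)
    (hhead : γ.head? = some J) (hJ' : J' ∈ level H k) (hunion : J' ∪ J ∈ level H (k + 1)) :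
    IsKPath H k (J' :: γ) := by
  refine ⟨List.cons_ne_nil _ _, ?_, List.isChain_cons.mpr ⟨?_, hγ.2.2⟩⟩
  · simpa [hJ'] using hγ.2.1
  · simpa [hhead] using hunion

lemma IsKPath.concat {γ : List (Finset I)} {J J' : Finset I} (hγ : IsKPath H k γ)
    (hlast : γ.getLast? = some J) (hJ' : J' ∈ level H k) (hunion : J ∪ J' ∈ level H (k + 1)) :
    IsKPath H k (γ ++ [J']) := by
  refine ⟨by simp, ?_, List.isChain_append.mpr ⟨hγ.2.2, List.isChain_singleton _, ?_⟩⟩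
  · simpa [hJ', or_imp, forall_and] using hγ.2.1
  · simpa [hlast] using hunion

lemma IsKPath.reverse {γ : List (Finset I)} (hγ : IsKPath H k γ) : IsKPath H k γ.reverse := by
  refine ⟨by simpa using hγ.1, by simpa using hγ.2.1, List.isChain_reverse.mpr ?_⟩
  exact hγ.2.2.imp fun a b hab => by rwa [Finset.union_comm]

end Paths

lemma KConnectedIn.insert_of_union_mem {H A : Set (Finset I)} {k : ℕ} (hA : KConnectedIn H k A)
    {e K : Finset I} (he : e ∈ level H k) (hK : K ∈ A) (heK : e ∪ K ∈ level H (k + 1)) :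
    KConnectedIn H k (insert e A) := by
  have from_e : ∀ J ∈ A, ∃ γ, IsKPath H k γ ∧ Joins γ e J ∧ ∀ L ∈ γ, L ∈ insert e A := by
    intro J hJ
    obtain ⟨γ, hγ, ⟨hhead, hlast⟩, hγA⟩ := hA K hK J hJ
    refine ⟨e :: γ, hγ.cons hhead he heK, ⟨rfl, ?_⟩, ?_⟩
    · rw [List.getLast?_cons, hlast]
      rfl
    · simpa [or_imp, forall_and] using fun L hL => Or.inr (hγA L hL)
  intro J hJ J' hJ'
  rcases hJ with rfl | hJ <;> rcases hJ' with rfl | hJ'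
  · exact ⟨[_], .singleton he, ⟨rfl, rfl⟩, by simp⟩
  · exact from_e J' hJ'
  · obtain ⟨γ, hγ, hjoin, hγA⟩ := from_e J hJ
    exact ⟨γ.reverse, hγ.reverse, hjoin.reverse, by simpa using hγA⟩
  · obtain ⟨γ, hγ, hjoin, hγA⟩ := hA J hJ J' hJ'
    exact ⟨γ, hγ, hjoin, fun L hL => Set.mem_insert_of_mem _ (hγA L hL)⟩

namespace NodalDatum

variable {H : Set (Finset I)} (D : NodalDatum H)

lemma mem_minus_iff {T : Finset I} (hT : T ∈ D.N) {x : I} (hx : x ∈ T) :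
    x ∈ D.minus T ↔ x ∉ D.plus T := by
  rw [← D.union_eq T hT, Finset.mem_union] at hx
  have := Finset.disjoint_left.mp (D.disj T hT)
  tauto

lemma pair_mem_N_iff {T : Finset I} (hT : T ∈ D.N) {x y : I} (hx : x ∈ T) (hy : y ∈ T) :
    {x, y} ∈ D.N ↔ (x ∈ D.plus T ↔ y ∉ D.plus T) := by
  have hsub : {x, y} ⊆ T := by simp [Finset.insert_subset_iff, hx, hy]
  have hnonempty : ∀ P : Finset I, (({x, y} : Finset I) ∩ P).Nonempty ↔ x ∈ P ∨ y ∈ P := by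
    simp [Finset.Nonempty, or_and_right, exists_or]
  rw [D.mem_iff T hT _ hsub, hnonempty, hnonempty, D.mem_minus_iff hT hx, D.mem_minus_iff hT hy]
  tauto

/-- `K` meets both sides of the partition of `T`. -/
lemma exists_pair_not_mem_N {T K : Finset I} (hT : T ∈ D.N) (hK : K ∈ D.N) (hKT : K ⊆ T)
    {v : I} (hv : v ∈ T) : ∃ v' ∈ K, {v, v'} ∉ D.N := by
  obtain ⟨⟨p, hp⟩, ⟨m, hm⟩⟩ := (D.mem_iff T hT K hKT).mp hK
  rw [Finset.mem_inter] at hp hm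
  have hmT := D.mem_minus_iff hT (hKT hm.1)
  by_cases hvp : v ∈ D.plus T
  · exact ⟨p, hp.1, by rw [D.pair_mem_N_iff hT hv (hKT hp.1)]; tauto⟩
  · exact ⟨m, hm.1, by rw [D.pair_mem_N_iff hT hv (hKT hm.1)]; tauto⟩

end NodalDatum

section Blocks

variable {H : Set (Finset I)} {D : NodalDatum H} {B : Set (Finset I)}

lemma IsNodalBlock.subset (hB : IsNodalBlock D B) : B ⊆ D.N ∩ level H 2 :=
  hB.2.1

lemma IsNodalBlock.mem_of_union_mem (hB : IsNodalBlock D B) {e K : Finset I}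
    (he : e ∈ D.N ∩ level H 2) (hK : K ∈ B) (heK : e ∪ K ∈ level H 3) : e ∈ B := by
  obtain ⟨-, hBN, hBconn, hBmax⟩ := hB
  have hmax := hBmax (insert e B) (Set.subset_insert e B)
    (Set.insert_subset he hBN) (hBconn.insert_of_union_mem he.2 hK heK)
  exact hmax ▸ Set.mem_insert e B

lemma IsSepBlock.pair_mem_iff (hB : IsSepBlock D B) {T K : Finset I} (hT : T ∈ level H 3)
    (hK : K ∈ B) (hKT : K ⊆ T) {x y : I} (hx : x ∈ T) (hy : y ∈ T) :
    {x, y} ∈ B ↔ (x ∈ D.plus T ↔ y ∉ D.plus T) := by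
  have hTN : T ∈ D.N := (hB.2 hK).2 T hT.1 hKT
  rw [← D.pair_mem_N_iff hTN hx hy]
  refine ⟨fun hxy => (hB.1.subset hxy).1, fun hxyN => ?_⟩
  have hxy : x ≠ y := by
    rintro rfl
    rw [D.pair_mem_N_iff hTN hx hx] at hxyN
    tauto
  have hpair : {x, y} ∈ D.N ∩ level H 2 := ⟨hxyN, D.N_sub hxyN, Finset.card_pair hxy⟩
  by_cases hKeq : {x, y} = K
  · exact hKeq ▸ hK
  have hK2 : K.card = 2 := (hB.1.subset hK).2.2
  have hunion : {x, y} ∪ K = T := by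
    refine Finset.eq_of_subset_of_card_le (Finset.union_subset ?_ hKT) ?_
    · simp [Finset.insert_subset_iff, hx, hy]
    have hnot : ¬ {x, y} ⊆ K := fun h =>
      hKeq (Finset.eq_of_subset_of_card_le h (by rw [hK2, Finset.card_pair hxy]))
    have hlt : K ⊂ {x, y} ∪ K := Finset.subset_union_right.ssubset_of_not_subset
      fun h => hnot (Finset.union_subset_iff.mp h).1
    have := Finset.card_lt_card hlt
    rw [hT.2]
    omega
  exact hB.1.mem_of_union_mem hpair hK (hunion ▸ hT)

end Blocks

section Parity

variable {H : Set (Finset I)} {D : NodalDatum H} {B : Set (Finset I)}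

lemma kappa_triple (B : Set (Finset I)) (x y z : Finset I) :
    kappa B [x, y, z] = kappa B [x, y] + kappa B [y, z] := by
  simp only [kappa, subSup, List.tail_cons, List.zipWith_cons_cons, List.zipWith_nil_right,
    List.countP_cons, List.countP_nil]
  omega

/-- Inside the 3-stratum `T` the pairs of `B` are those crossing the partition of `T`, and a
triangle crosses it an even number of times. -/
lemma IsSepBlock.kappa_modEq_of_triangle (hB : IsSepBlock D B) {a b c : I}
    (hT : {a, c} ∪ {c, b} ∈ level H 3) :
    kappa B [{a}, {b}] ≡ kappa B [{a}, {c}, {b}] [MOD 2] := by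
  set T : Finset I := {a, c} ∪ {c, b}
  have ha : a ∈ T := by simp [T]
  have hb : b ∈ T := by simp [T]
  have hc : c ∈ T := by simp [T]
  simp only [kappa_triple, kappa_pair, ← Finset.insert_eq]
  by_cases hBT : ∃ K ∈ B, K ⊆ T
  · obtain ⟨K, hK, hKT⟩ := hBT
    simp only [hB.pair_mem_iff hT hK hKT ha hb, hB.pair_mem_iff hT hK hKT ha hc,
      hB.pair_mem_iff hT hK hKT hc hb]
    by_cases pa : a ∈ D.plus T <;> by_cases pb : b ∈ D.plus T <;>
      by_cases pc : c ∈ D.plus T <;> simp [pa, pb, pc] <;> decide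
  · have hnot : ∀ x ∈ T, ∀ y ∈ T, {x, y} ∉ B := fun x hx y hy hxy =>
      hBT ⟨_, hxy, by simp [Finset.insert_subset_iff, hx, hy]⟩
    simp [hnot a ha b hb, hnot a ha c hc, hnot c hc b hb, Nat.ModEq.refl]

lemma ElemPairCore.head?_eq {ε₁ ε₂ : List (Finset I)} (h : ElemPairCore H ε₁ ε₂) :
    ε₁.head? = ε₂.head? := by
  rcases h with rfl | ⟨_, _, rfl, rfl⟩ | ⟨_, _, _, rfl, rfl, -⟩ <;> rfl

lemma ElemPairCore.getLast?_eq {ε₁ ε₂ : List (Finset I)} (h : ElemPairCore H ε₁ ε₂) :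
    ε₁.getLast? = ε₂.getLast? := by
  rcases h with rfl | ⟨_, _, rfl, rfl⟩ | ⟨_, _, _, rfl, rfl, -⟩ <;> rfl

lemma IsSepBlock.kappa_modEq_of_elemPairCore (hB : IsSepBlock D B) {ε₁ ε₂ : List (Finset I)}
    (h : ElemPairCore H ε₁ ε₂) : kappa B ε₁ ≡ kappa B ε₂ [MOD 2] := by
  rcases h with rfl | ⟨a, b, rfl, rfl⟩ | ⟨a, b, c, rfl, rfl, hpath⟩
  · rfl
  · rw [kappa_triple, kappa_pair, kappa_pair, Finset.union_comm {b} {a}]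
    change _ % 2 = 0 % 2
    split_ifs <;> rfl
  · exact hB.kappa_modEq_of_triangle (List.isChain_cons_cons.mp hpath.2.2).1

lemma IsSepBlock.kappa_modEq_of_elemHomotopy (hB : IsSepBlock D B) {γ₁ γ₂ : List (Finset I)}
    (h : ElemHomotopy H γ₁ γ₂) : kappa B γ₁ ≡ kappa B γ₂ [MOD 2] := by
  obtain ⟨δ, ε₁, ε₂, ρ, hpair, rfl, rfl⟩ := h
  have hends : ε₁.head? = ε₂.head? ∧ ε₁.getLast? = ε₂.getLast? := by
    rcases hpair with h | h
    · exact ⟨h.head?_eq, h.getLast?_eq⟩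
    · exact ⟨h.head?_eq.symm, h.getLast?_eq.symm⟩
  have hε : kappa B ε₁ ≡ kappa B ε₂ [MOD 2] := by
    rcases hpair with h | h
    · exact hB.kappa_modEq_of_elemPairCore h
    · exact (hB.kappa_modEq_of_elemPairCore h).symm
  have hsplice := kappa_splice B δ ρ hends.1 hends.2
  unfold Nat.ModEq at hε ⊢
  omega

lemma SimplyConnected.kappa_modEq (hsc : SimplyConnected H) (hB : IsSepBlock D B)
    {γ γ' : List (Finset I)} (hγ : IsKPath H 1 γ) (hγ' : IsKPath H 1 γ')
    (hhead : γ.head? = γ'.head?) (hlast : γ.getLast? = γ'.getLast?) :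
    kappa B γ ≡ kappa B γ' [MOD 2] := by
  obtain ⟨-, hchain⟩ := hsc.2 γ γ' hγ hγ' hγ.2.1 hγ'.2.1 hhead hlast
  clear hγ' hhead hlast
  induction hchain with
  | refl => rfl
  | tail _ hstep ih => exact ih.trans (hB.kappa_modEq_of_elemHomotopy hstep.1)

lemma disjoint_ABset_BBset (hsc : SimplyConnected H) (hB : IsSepBlock D B) (i : I) :
    Disjoint (ABset H B i) (BBset H B i) := by
  refine Set.disjoint_left.mpr fun J ⟨_, γ, hγ, hγJ, heven⟩ ⟨_, γ', hγ', hγ'J, hodd⟩ => ?_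
  have := hsc.kappa_modEq hB hγ hγ' (hγJ.1.trans hγ'J.1.symm) (hγJ.2.trans hγ'J.2.symm)
  rw [Nat.even_iff] at heven
  rw [Nat.odd_iff] at hodd
  unfold Nat.ModEq at this
  omega

end Parity

lemma singleton_mem_ABset {H : Set (Finset I)} (hH : IsCSS H) (B : Set (Finset I)) (i : I) :
    {i} ∈ ABset H B i :=
  ⟨hH.singleton_mem_level i, [{i}], .singleton (hH.singleton_mem_level i), ⟨rfl, rfl⟩,
    by simp [kappa, subSup]⟩

lemma concat_mem_BBset {H B : Set (Finset I)} (hH : IsCSS H) (hB : B ⊆ level H 2)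
    {β : List (Finset I)} {i w j : I} (hβ : IsKPath H 1 β) (hjoin : Joins β {i} {w})
    (heven : Even (kappa B β)) (hwj : {w, j} ∈ B) : {j} ∈ BBset H B i := by
  have hunion : {w} ∪ {j} ∈ B := by rwa [← Finset.insert_eq]
  refine ⟨hH.singleton_mem_level j, β ++ [{j}],
    hβ.concat hjoin.2 (hH.singleton_mem_level j) (hB hunion),
    ⟨by rw [List.head?_append, hjoin.1]; rfl, List.getLast?_concat⟩, ?_⟩
  have hstep : kappa B [{w}, {j}] = 1 := by rw [kappa_pair, if_pos hunion]
  rw [kappa_append, hjoin.2]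
  change Odd (kappa B β + kappa B [{w}, {j}] + kappa B [{j}])
  rw [hstep]
  exact heven.add_one

def JoinedAvoiding (H N : Set (Finset I)) (v w : I) : Prop :=
  ∃ β, IsKPath H 1 β ∧ Joins β {v} {w} ∧ ∀ J ∈ subSup β, J ∉ N

namespace JoinedAvoiding

variable {H N : Set (Finset I)}

lemma refl (hH : IsCSS H) (v : I) : JoinedAvoiding H N v v :=
  ⟨[{v}], .singleton (hH.singleton_mem_level v), ⟨rfl, rfl⟩, by simp [subSup]⟩

lemma cons (hH : IsCSS H) {u v w : I} (huv : {u, v} ∈ H) (huvN : {u, v} ∉ N)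
    (h : JoinedAvoiding H N v w) : JoinedAvoiding H N u w := by
  obtain rfl | hne := eq_or_ne u v
  · exact h
  obtain ⟨β, hβ, ⟨hhead, hlast⟩, hβN⟩ := h
  obtain ⟨β, rfl⟩ : ∃ β', β = {v} :: β' := ⟨β.tail, List.eq_cons_of_mem_head? hhead⟩
  have hunion : {u} ∪ {v} = ({u, v} : Finset I) := (Finset.insert_eq u {v}).symm
  refine ⟨{u} :: {v} :: β, hβ.cons hhead (hH.singleton_mem_level u) ?_, ⟨rfl, ?_⟩, ?_⟩
  · rw [hunion]
    exact ⟨huv, Finset.card_pair hne⟩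
  · rwa [List.getLast?_cons_cons]
  · simpa [subSup_cons_cons, hunion, huvN] using hβN

end JoinedAvoiding

lemma IsKPath.exists_joinedAvoiding {H : Set (Finset I)} (hH : IsCSS H) {D : NodalDatum H}
    {k : ℕ} {ω : List (Finset I)} (hω : IsKPath H k ω) (hωN : ∀ K ∈ ω, K ∈ Nstar D)
    {K₀ Ku : Finset I} (hhead : ω.head? = some K₀) (hlast : ω.getLast? = some Ku)
    {v : I} (hv : v ∈ K₀) : ∃ w ∈ Ku, JoinedAvoiding H D.N v w := by
  induction ω generalizing K₀ v with
  | nil => simp at hhead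
  | cons K ω ih =>
    obtain rfl : K = K₀ := by simpa using hhead
    cases ω with
    | nil =>
      obtain rfl : K = Ku := by simpa using hlast
      exact ⟨v, hv, .refl hH v⟩
    | cons K' ω =>
      have hKK' : K ∪ K' ∈ H := (List.isChain_cons_cons.mp hω.2.2).1.1
      have hTN : K ∪ K' ∈ D.N := (hωN K (by simp)).2 _ hKK' Finset.subset_union_left
      obtain ⟨v', hv', hvv'⟩ := D.exists_pair_not_mem_N hTN (hωN K' (by simp)).1
        Finset.subset_union_right (Finset.mem_union_left _ hv)
      have htail : IsKPath H k (K' :: ω) :=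
        ⟨List.cons_ne_nil _ _, fun J hJ => hω.2.1 J (List.mem_cons_of_mem _ hJ), hω.2.2.tail⟩
      rw [List.getLast?_cons_cons] at hlast
      obtain ⟨w, hw, hjoin⟩ :=
        ih htail (fun L hL => hωN L (List.mem_cons_of_mem _ hL)) rfl hlast hv'
      have hvv'H : {v, v'} ∈ H := hH.1 _ hKK' _ <| by
        simp [Finset.insert_subset_iff, hv, hv']
      exact ⟨w, hw, hjoin.cons hH hvv'H hvv'⟩

end

theorem connection_avoiding_nodal_strata_general
    {I : Type*} [DecidableEq I] (H : Set (Finset I))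
    (hH : IsCSS H) (hsc : SimplyConnected H)
    (D : NodalDatum H) (B : Set (Finset I)) (hB : IsSepBlock D B)
    (i j : I) (hAB : ABset H B i = ABset H B j)
    (ω : List (Finset I)) (hω : IsKPath H 2 ω) (hωB : ∀ K ∈ ω, K ∈ B)
    (K₀ Ku : Finset I) (hhead : ω.head? = some K₀) (hiK : i ∈ K₀)
    (hlast : ω.getLast? = some Ku) (hjK : j ∈ Ku) :
    ∃ β : List (Finset I), IsKPath H 1 β ∧
      Joins β ({i} : Finset I) ({j} : Finset I) ∧
      (∀ J ∈ subSup β, J ∉ D.N) ∧ kappa B β = 0 := by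
  have hBlevel : B ⊆ level H 2 := fun K hK => (hB.1.subset hK).2
  obtain ⟨w, hwK, β, hβ, hβjoin, hβN⟩ :=
    hω.exists_joinedAvoiding hH (fun K hK => hB.2 (hωB K hK)) hhead hlast hiK
  have hκ : kappa B β = 0 := kappa_eq_zero fun J hJ hJB => hβN J hJ (hB.1.subset hJB).1
  obtain rfl | hwj := eq_or_ne w j
  · exact ⟨β, hβ, hβjoin, hβN, hκ⟩
  exfalso
  have hKuB : Ku ∈ B := hωB Ku (List.mem_of_getLast? hlast)
  have hwjKu : {w, j} = Ku := Finset.eq_of_subset_of_card_le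
    (by simp [Finset.insert_subset_iff, hwK, hjK])
    (by rw [(hBlevel hKuB).2, Finset.card_pair hwj])
  have hodd : {j} ∈ BBset H B i :=
    concat_mem_BBset hH hBlevel hβ hβjoin (by simp [hκ]) (hwjKu ▸ hKuB)
  have heven : {j} ∈ ABset H B i := hAB ▸ singleton_mem_ABset hH B j
  exact Set.disjoint_left.mp (disjoint_ABset_BBset hsc hB i) heven hodd

/-- Let `B` be a nodal separating block, `i ≠ j` with
`A_B(i) = A_B(j)`, and suppose there is a 2-path in `H` with support in `B` whose first
entry contains `i` and whose last entry contains `j`. Then there is a 1-path `β` joining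
`{i}` and `{j}` such that no entry of the subsupport of `β` belongs to `N`; in particular
`κ_B(β) = 0`. -/
theorem connection_avoiding_nodal_strata
    {I : Type*} [Fintype I] [DecidableEq I] (H : Set (Finset I))
    (hH : IsCSS H) (hsc : SimplyConnected H)
    (D : NodalDatum H) (B : Set (Finset I)) (hB : IsSepBlock D B)
    (i j : I) (hij : i ≠ j) (hAB : ABset H B i = ABset H B j)
    (ω : List (Finset I)) (hω : IsKPath H 2 ω) (hωB : ∀ K ∈ ω, K ∈ B)
    (K₀ Ku : Finset I) (hhead : ω.head? = some K₀) (hiK : i ∈ K₀)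
    (hlast : ω.getLast? = some Ku) (hjK : j ∈ Ku) :
    ∃ β : List (Finset I), IsKPath H 1 β ∧
      Joins β ({i} : Finset I) ({j} : Finset I) ∧
      (∀ J ∈ subSup β, J ∉ D.N) ∧ kappa B β = 0 :=
  connection_avoiding_nodal_strata_general H hH hsc D B hB i j hAB ω hω hωB K₀ Ku hhead hiK hlast
    hjK
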